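/- Let G = Z₂ = {1, g}, F an abelian group, (F, Z₂, ◁, ▷) a matched pair (so ◁ is trivial), σ, τ cocycle data, and let (k^{Z₂} τ#_σ kF, R) be a coquasitriangular Hopf algebra. Set S = {f ∈ F : g ▷ f = f} and T = {f ∈ F : g ▷ f ≠ f}, and assume T ≠ ∅. Then: (1) R(p_g # f, p_1 # f') = R(p_1 # f, p_g # f') = R(p_g # f, p_g # f') = 0 for all f, f' ∈ S; (2) R(p_1 # f, p_1 # f') · R(p_g # f, p_g # f'') = 0 for all f' ∈ F and f, f'' ∈ T; (3) R(p_1 # f, p_1 # f') · R(p_g # f'', p_g # f') = 0 for all f ∈ F and f', f'' ∈ T. -/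

import Mathlib

/-! Comparing the coefficients of `p_1 # f f'` in the quasi-commutativity axiom shows that
`R(p_x # f, p_y # f') = 0` unless `(y ▷ f')(x ▷ f) = f f'`; for abelian `F` this kills `R`
whenever exactly one of `f, f'` is moved by `g`. In the two multiplicativity axioms the sum
over the coproduct then collapses to its `x = 1` term, which gives (2) and (3) at once, and
gives (1) after writing an element of `S` as a product with an element `t ∈ T`. -/

/-- A matched pair of groups `(F, G, ◁, ▷)`: `rtr g f = g ▷ f` is an action of the
group `G` on the set `F`, and `ltl g f = g ◁ f` is an action of the group `F` on the
set `G`, satisfying the matched pair compatibility conditions. -/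
structure MatchedPair (F G : Type*) [Group F] [Group G] where
  rtr : G → F → F
  ltl : G → F → G
  one_rtr : ∀ f, rtr 1 f = f
  mul_rtr : ∀ g g' f, rtr (g * g') f = rtr g (rtr g' f)
  ltl_one : ∀ g, ltl g 1 = g
  ltl_mul : ∀ g f f', ltl g (f * f') = ltl (ltl g f) f'
  rtr_mul : ∀ g f f', rtr g (f * f') = rtr g f * rtr (ltl g f) f'
  mul_ltl : ∀ g g' f, ltl (g * g') f = ltl g (rtr g' f) * ltl g' f

/-- Cocycle data `(σ, τ)` for the abelian extension `k^G τ#_σ kF`. -/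
structure CocycleData (k F G : Type*) [Field k] [Group F] [Group G]
    (mp : MatchedPair F G) where
  sig : G → F → F → kˣ
  tau : G → G → F → kˣ
  sig_one_left : ∀ g f, sig g 1 f = 1
  sig_one_right : ∀ g f, sig g f 1 = 1
  one_sig : ∀ f f', sig 1 f f' = 1
  sig_cocycle : ∀ g f f' f'',
    sig (mp.ltl g f) f' f'' * sig g f (f' * f'') = sig g f f' * sig g (f * f') f''
  one_tau : ∀ g f, tau 1 g f = 1
  tau_one : ∀ g f, tau g 1 f = 1
  tau_one_right : ∀ g g', tau g g' 1 = 1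
  tau_cocycle : ∀ g g' g'' f,
    tau g g' (mp.rtr g'' f) * tau (g * g') g'' f = tau g (g' * g'') f * tau g' g'' f
  compat : ∀ g g' f f',
    sig (g * g') f f' * tau g g' (f * f')
      = sig g (mp.rtr g' f) (mp.rtr (mp.ltl g' f) f') * sig g' f f' * tau g g' f
        * tau (mp.ltl g (mp.rtr g' f)) (mp.ltl g' f) f'

/-- The product `(p_g # f)(p_{g'} # f') = δ_{g ◁ f, g'} σ(g; f, f') p_g # (f f')` of two
basis elements of `H = k^G τ#_σ kF`, as an element of `H` (realized as `(G × F) →₀ k`). -/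
noncomputable def mulB {k F G : Type*} [Field k] [Group F] [Group G] [DecidableEq G]
    (mp : MatchedPair F G) (cd : CocycleData k F G mp) (i j : G × F) : (G × F) →₀ k :=
  if mp.ltl i.1 i.2 = j.1 then
    Finsupp.single (i.1, i.2 * j.2) ((cd.sig i.1 i.2 j.2 : kˣ) : k)
  else 0

/-- `R` (given by its values `R g f h f' = R(p_g # f, p_h # f')` on the basis
`{p_g # f}` of `H = k^G τ#_σ kF`) is a coquasitriangular structure on `H`:
it is convolution invertible, satisfies `R(a, bc) = Σ R(a₁, c) R(a₂, b)` and
`R(ab, c) = Σ R(a, c₁) R(b, c₂)`, and the quasi-commutativity axiom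
`Σ R(a₁, b₁) a₂ b₂ = Σ b₁ a₁ R(a₂, b₂)`, all expressed on basis elements using
`Δ(p_g # f) = Σ_x τ(g x⁻¹, x; f) (p_{g x⁻¹} # (x ▷ f)) ⊗ (p_x # f)` and
`ε(p_g # f) = δ_{g,1}`. -/
structure IsCQT {k F G : Type*} [Field k] [Group F] [Group G] [Fintype G] [DecidableEq G]
    (mp : MatchedPair F G) (cd : CocycleData k F G mp)
    (R : G → F → G → F → k) : Prop where
  conv_inv : ∃ R' : G → F → G → F → k,
    (∀ (g h : G) (f f' : F),
      ∑ x : G, ∑ y : G,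
        ((cd.tau (g * x⁻¹) x f : kˣ) : k) * ((cd.tau (h * y⁻¹) y f' : kˣ) : k) *
          R (g * x⁻¹) (mp.rtr x f) (h * y⁻¹) (mp.rtr y f') * R' x f y f'
        = (if g = 1 then (1 : k) else 0) * (if h = 1 then (1 : k) else 0)) ∧
    (∀ (g h : G) (f f' : F),
      ∑ x : G, ∑ y : G,
        ((cd.tau (g * x⁻¹) x f : kˣ) : k) * ((cd.tau (h * y⁻¹) y f' : kˣ) : k) *
          R' (g * x⁻¹) (mp.rtr x f) (h * y⁻¹) (mp.rtr y f') * R x f y f'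
        = (if g = 1 then (1 : k) else 0) * (if h = 1 then (1 : k) else 0))
  cqt1 : ∀ (g h l : G) (f f' f'' : F),
    (if mp.ltl h f' = l then (1 : k) else 0) * ((cd.sig h f' f'' : kˣ) : k)
        * R g f h (f' * f'')
      = ∑ x : G, ((cd.tau (g * x⁻¹) x f : kˣ) : k)
          * R (g * x⁻¹) (mp.rtr x f) l f'' * R x f h f'
  cqt2 : ∀ (g h l : G) (f f' f'' : F),
    (if mp.ltl g f = h then (1 : k) else 0) * ((cd.sig g f f' : kˣ) : k)
        * R g (f * f') l f''
      = ∑ x : G, ((cd.tau (l * x⁻¹) x f'' : kˣ) : k)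
          * R g f (l * x⁻¹) (mp.rtr x f'') * R h f' x f''
  qcomm : ∀ (g h : G) (f f' : F),
    (∑ x : G, ∑ y : G,
      (((cd.tau (g * x⁻¹) x f : kˣ) : k) * ((cd.tau (h * y⁻¹) y f' : kˣ) : k) *
        R (g * x⁻¹) (mp.rtr x f) (h * y⁻¹) (mp.rtr y f')) • mulB mp cd (x, f) (y, f'))
      = ∑ x : G, ∑ y : G,
        (((cd.tau (g * x⁻¹) x f : kˣ) : k) * ((cd.tau (h * y⁻¹) y f' : kˣ) : k) *
          R x f y f') • mulB mp cd (h * y⁻¹, mp.rtr y f') (g * x⁻¹, mp.rtr x f)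

theorem eq_of_ne_one_of_card_eq_two {G : Type*} [Group G] [Fintype G]
    (hG : Fintype.card G = 2) {g x : G} (hg : g ≠ 1) (hx : x ≠ 1) : x = g :=
  ((Nat.card_eq_two_iff' (1 : G)).1 (Nat.card_eq_fintype_card.trans hG)).unique hx hg

namespace MatchedPair

variable {F G : Type*} [Group F] [Group G] (mp : MatchedPair F G)

theorem one_ltl (f : F) : mp.ltl 1 f = 1 := by
  have h := mp.mul_ltl 1 1 f
  rw [one_mul, mp.one_rtr] at h
  exact mul_eq_right.mp h.symm

theorem ltl_eq_one_iff {x : G} {f : F} : mp.ltl x f = 1 ↔ x = 1 := by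
  refine ⟨fun h => ?_, fun h => h ▸ mp.one_ltl f⟩
  have hx := mp.ltl_mul x f f⁻¹
  rwa [mul_inv_cancel, mp.ltl_one, h, one_ltl] at hx

theorem ltl_eq_self_of_card_eq_two [Fintype G] (hG : Fintype.card G = 2) (x : G) (f : F) :
    mp.ltl x f = x := by
  by_cases hx : x = 1
  · rw [hx, one_ltl]
  · rw [eq_of_ne_one_of_card_eq_two hG hx (mp.ltl_eq_one_iff.not.2 hx)]

end MatchedPair

theorem mulB_apply_eq_zero {k F G : Type*} [Field k] [Group F] [Group G] [DecidableEq G]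
    {mp : MatchedPair F G} (cd : CocycleData k F G mp) {i j p : G × F}
    (h : (i.1, i.2 * j.2) ≠ p) : mulB mp cd i j p = 0 := by
  unfold mulB
  split_ifs
  · exact Finsupp.single_eq_of_ne' h
  · rfl

namespace IsCQT

section Group

variable {k F G : Type*} [Field k] [Group F] [Group G] [Fintype G] [DecidableEq G]
  {mp : MatchedPair F G} {cd : CocycleData k F G mp} {R : G → F → G → F → k}

theorem eq_zero_of_rtr_mul_rtr_ne (hR : IsCQT mp cd R) {g h : G} {f f' : F}
    (hne : mp.rtr h f' * mp.rtr g f ≠ f * f') : R g f h f' = 0 := by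
  classical
  have key := DFunLike.congr_fun (hR.qcomm g h f f') (1, f * f')
  have rhs : ∀ x y : G,
      mulB mp cd (h * y⁻¹, mp.rtr y f') (g * x⁻¹, mp.rtr x f) (1, f * f') = 0 := by
    intro x y
    unfold mulB
    split_ifs with hl
    · refine Finsupp.single_eq_of_ne' fun heq => ?_
      obtain ⟨hy, hmul⟩ := Prod.ext_iff.1 heq
      obtain rfl : y = h := (mul_inv_eq_one.1 hy).symm
      rw [hy, mp.one_ltl, eq_comm, mul_inv_eq_one] at hl
      subst hl
      exact hne hmul
    · rfl
  simp only [Finsupp.finsetSum_apply, Finsupp.smul_apply, smul_eq_mul, rhs, mul_zero,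
    Finset.sum_const_zero] at key
  rw [Fintype.sum_eq_single 1, Fintype.sum_eq_single 1] at key
  · simpa [mulB, mp.one_ltl, cd.tau_one, cd.one_sig, mp.one_rtr] using key
  · intro y hy
    simp [mulB, mp.one_ltl, Ne.symm hy]
  · intro x hx
    exact Finset.sum_eq_zero fun y _ =>
      mul_eq_zero_of_right _ (mulB_apply_eq_zero cd fun heq => hx (Prod.ext_iff.1 heq).1)

theorem cqt1_of_forall_ne_one (hR : IsCQT mp cd R) {g h : G} {f f' : F}
    (h0 : ∀ x ≠ 1, R x f h f' = 0) (l : G) (f'' : F) :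
    (if mp.ltl h f' = l then (1 : k) else 0) * ((cd.sig h f' f'' : kˣ) : k)
        * R g f h (f' * f'') = R g f l f'' * R 1 f h f' := by
  rw [hR.cqt1, Fintype.sum_eq_single 1 fun x hx => by rw [h0 x hx, mul_zero]]
  simp [cd.tau_one, mp.one_rtr]

theorem cqt2_of_forall_ne_one (hR : IsCQT mp cd R) {g h : G} {f' f'' : F}
    (h0 : ∀ x ≠ 1, R h f' x f'' = 0) (l : G) (f : F) :
    (if mp.ltl g f = h then (1 : k) else 0) * ((cd.sig g f f' : kˣ) : k)
        * R g (f * f') l f'' = R g f l f'' * R h f' 1 f'' := by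
  rw [hR.cqt2, Fintype.sum_eq_single 1 fun x hx => by rw [h0 x hx, mul_zero]]
  simp [cd.tau_one, mp.one_rtr]

theorem apply_mul_right_eq_zero (hR : IsCQT mp cd R) {g h : G} {f f' : F}
    (h0 : ∀ x, R x f h f' = 0) (f'' : F) : R g f h (f' * f'') = 0 := by
  have key := hR.cqt1_of_forall_ne_one (g := g) (fun x _ => h0 x) (mp.ltl h f') f''
  rw [if_pos rfl, one_mul, h0, mul_zero] at key
  exact (mul_eq_zero.1 key).resolve_left (Units.ne_zero _)

theorem apply_mul_left_eq_zero (hR : IsCQT mp cd R) {g : G} {f f' f'' : F}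
    (h0 : ∀ x, R (mp.ltl g f) f' x f'' = 0) (l : G) : R g (f * f') l f'' = 0 := by
  have key := hR.cqt2_of_forall_ne_one (g := g) (fun x _ => h0 x) l f
  rw [if_pos rfl, one_mul, h0, mul_zero] at key
  exact (mul_eq_zero.1 key).resolve_left (Units.ne_zero _)

end Group

section CommGroup

variable {k F G : Type*} [Field k] [CommGroup F] [Group G] [Fintype G] [DecidableEq G]
  {mp : MatchedPair F G} {cd : CocycleData k F G mp} {R : G → F → G → F → k}

theorem eq_zero_of_rtr_ne_of_rtr_eq (hR : IsCQT mp cd R) {g h : G} {f f' : F}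
    (hf : mp.rtr g f ≠ f) (hf' : mp.rtr h f' = f') : R g f h f' = 0 :=
  hR.eq_zero_of_rtr_mul_rtr_ne (by rwa [hf', mul_comm, Ne, mul_left_inj])

theorem eq_zero_of_rtr_eq_of_rtr_ne (hR : IsCQT mp cd R) {g h : G} {f f' : F}
    (hf : mp.rtr g f = f) (hf' : mp.rtr h f' ≠ f') : R g f h f' = 0 :=
  hR.eq_zero_of_rtr_mul_rtr_ne (by rwa [hf, mul_comm f, Ne, mul_left_inj])

end CommGroup

end IsCQT

theorem R_vanishing_of_Z2_abelian_general {k F G : Type*} [Field k]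
    [CommGroup F] [Group G] [Fintype G] [DecidableEq G]
    (hG : Fintype.card G = 2) (g : G) (hg : g ≠ 1)
    (mp : MatchedPair F G) (cd : CocycleData k F G mp)
    (R : G → F → G → F → k) (hR : IsCQT mp cd R)
    (hT : ∃ t : F, mp.rtr g t ≠ t) :
    (∀ f f' : F, mp.rtr g f = f → mp.rtr g f' = f' →
        R g f 1 f' = 0 ∧ R 1 f g f' = 0 ∧ R g f g f' = 0) ∧
      (∀ f f' f'' : F, mp.rtr g f ≠ f → mp.rtr g f'' ≠ f'' →
        R 1 f 1 f' * R g f g f'' = 0) ∧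
      (∀ f f' f'' : F, mp.rtr g f' ≠ f' → mp.rtr g f'' ≠ f'' →
        R 1 f 1 f' * R g f'' g f' = 0) := by
  have hZ2 : ∀ x : G, x ≠ 1 → x = g := fun x hx => eq_of_ne_one_of_card_eq_two hG hg hx
  have hfix : ∀ {f : F}, mp.rtr g f = f → ∀ x, mp.rtr x f = f := fun {f} hf x => by
    rcases eq_or_ne x 1 with rfl | hx
    · exact mp.one_rtr f
    · rwa [hZ2 x hx]
  refine ⟨fun f f' hf hf' => ?_, fun f f' f'' hf _ => ?_, fun f f' f'' hf' _ => ?_⟩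
  · obtain ⟨t, ht⟩ := hT
    have hrow : ∀ x, R g t x f' = 0 := fun x => hR.eq_zero_of_rtr_ne_of_rtr_eq ht (hfix hf' x)
    have hcol : ∀ x, R x f g t = 0 := fun x => hR.eq_zero_of_rtr_eq_of_rtr_ne (hfix hf x) ht
    have hrow_f : ∀ l, R g f l f' = 0 := fun l => by
      simpa only [inv_mul_cancel_right] using
        hR.apply_mul_left_eq_zero (f := f * t⁻¹) (f' := t)
          (by rwa [mp.ltl_eq_self_of_card_eq_two hG]) l
    have hcol_f : R 1 f g f' = 0 := by
      simpa only [mul_inv_cancel_left] using hR.apply_mul_right_eq_zero hcol (t⁻¹ * f')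
    exact ⟨hrow_f 1, hcol_f, hrow_f g⟩
  · have key := hR.cqt1_of_forall_ne_one (g := g) (f'' := f'')
      (fun x hx => hZ2 x hx ▸ hR.eq_zero_of_rtr_ne_of_rtr_eq hf (mp.one_rtr f')) g
    rw [mp.one_ltl, if_neg hg.symm, zero_mul, zero_mul] at key
    rw [mul_comm, key]
  · have key := hR.cqt2_of_forall_ne_one (g := g) (f' := f)
      (fun x hx => hZ2 x hx ▸ hR.eq_zero_of_rtr_eq_of_rtr_ne (mp.one_rtr f) hf') g f''
    rw [mp.ltl_eq_self_of_card_eq_two hG, if_neg hg, zero_mul, zero_mul] at key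
    rw [mul_comm, key]

/-- Let `G = Z₂ = {1, g}`, `F` abelian, `(k^{Z₂} τ#_σ kF, R)` coquasitriangular, and
set `S = {f : g ▷ f = f}`, `T = {f : g ▷ f ≠ f}`, with `T ≠ ∅`. Then:
(1) `R(p_g#f, p_1#f') = R(p_1#f, p_g#f') = R(p_g#f, p_g#f') = 0` for all `f, f' ∈ S`;
(2) `R(p_1#f, p_1#f') · R(p_g#f, p_g#f'') = 0` for all `f' ∈ F` and `f, f'' ∈ T`;
(3) `R(p_1#f, p_1#f') · R(p_g#f'', p_g#f') = 0` for all `f ∈ F` and `f', f'' ∈ T`. -/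
theorem R_vanishing_of_Z2_abelian {k F G : Type*} [Field k] [IsAlgClosed k]
    [CharZero k] [CommGroup F] [Group G] [Fintype G] [DecidableEq G]
    (hG : Fintype.card G = 2) (g : G) (hg : g ≠ 1)
    (mp : MatchedPair F G) (cd : CocycleData k F G mp)
    (R : G → F → G → F → k) (hR : IsCQT mp cd R)
    (hT : ∃ t : F, mp.rtr g t ≠ t) :
    (∀ f f' : F, mp.rtr g f = f → mp.rtr g f' = f' →
        R g f 1 f' = 0 ∧ R 1 f g f' = 0 ∧ R g f g f' = 0) ∧
      (∀ f f' f'' : F, mp.rtr g f ≠ f → mp.rtr g f'' ≠ f'' →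
        R 1 f 1 f' * R g f g f'' = 0) ∧
      (∀ f f' f'' : F, mp.rtr g f' ≠ f' → mp.rtr g f'' ≠ f'' →
        R 1 f 1 f' * R g f'' g f' = 0) :=
  R_vanishing_of_Z2_abelian_general hG g hg mp cd R hR hT
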